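/- For n ≥ 2 and k > 0, a connected graph G on n vertices satisfies β_k(G) = n − 1 if and only if G is the complete graph K_n. -/
import Mathlib


open SimpleGraph

/-- The `k`-truncated distance in a graph: `min (d u v) (k+1)`. -/
noncomputable def truncDist {V : Type*} (G : SimpleGraph V) (k : ℕ) (u v : V) : ℕ :=
  min (G.dist u v) (k + 1)

/-- A nonempty set `R` is a `k`-truncated resolving set if the vectors of truncated
distances to `R` distinguish all vertices. -/
def IsTruncResolving {V : Type*} (G : SimpleGraph V) (k : ℕ) (R : Set V) : Prop :=
  R.Nonempty ∧ ∀ u v : V, (∀ r ∈ R, truncDist G k u r = truncDist G k v r) → u = v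

/-- The `k`-truncated metric dimension: minimum size of a `k`-truncated resolving set. -/
noncomputable def truncMetricDim {V : Type*} [Fintype V] (G : SimpleGraph V) (k : ℕ) : ℕ :=
  sInf {m | ∃ R : Finset V, IsTruncResolving G k ↑R ∧ R.card = m}

private lemma exists_triple_aux {V : Type*} (G : SimpleGraph V) :
    ∀ (N : ℕ) (a b : V) (p : G.Walk a b), p.length ≤ N → p.IsPath → ¬ G.Adj a b → a ≠ b →
    ∃ u w x : V, G.Adj u w ∧ G.Adj w x ∧ ¬ G.Adj u x ∧ u ≠ x := by
  intro N
  induction N with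
  | zero =>
    intro a b p hlen _ _ hne
    cases p with
    | nil => exact absurd rfl hne
    | cons h q => simp at hlen
  | succ N ih =>
    intro a b p hlen hp hnadj hne
    cases p with
    | nil => exact absurd rfl hne
    | cons h q =>
      rename_i c
      cases q with
      | nil => exact absurd h hnadj
      | cons h2 q2 =>
        rename_i d
        have hp' := (SimpleGraph.Walk.cons_isPath_iff _ _).mp hp
        have hanot : a ∉ (SimpleGraph.Walk.cons h2 q2).support := hp'.2
        have had : a ≠ d := by
          intro hh
          apply hanot
          rw [SimpleGraph.Walk.support_cons]
          exact List.mem_cons_of_mem _ (hh ▸ q2.start_mem_support)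
        by_cases hadj : G.Adj a d
        · -- recurse on shorter walk
          have hq2path : q2.IsPath := hp'.1.of_cons
          have hanot2 : a ∉ q2.support := by
            intro hh
            exact hanot (by rw [SimpleGraph.Walk.support_cons]; exact List.mem_cons_of_mem _ hh)
          have hlen' : (SimpleGraph.Walk.cons hadj q2).length ≤ N := by
            simp only [SimpleGraph.Walk.length_cons] at hlen ⊢
            omega
          exact ih a b (SimpleGraph.Walk.cons hadj q2) hlen'
            ((SimpleGraph.Walk.cons_isPath_iff _ _).mpr ⟨hq2path, hanot2⟩) hnadj hne
        · exact ⟨a, c, d, h, h2, hadj, had⟩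

private lemma exists_triple {V : Type*} {G : SimpleGraph V} (hG : G.Connected)
    (hne : G ≠ ⊤) : ∃ u w x : V, G.Adj u w ∧ G.Adj w x ∧ ¬ G.Adj u x ∧ u ≠ x := by
  classical
  have : ∃ a b : V, a ≠ b ∧ ¬ G.Adj a b := by
    by_contra hcon
    push_neg at hcon
    apply hne
    ext a b
    simp only [top_adj]
    exact ⟨fun h => h.ne, fun h => hcon a b h⟩
  obtain ⟨a, b, hab, hnadj⟩ := this
  obtain ⟨p⟩ := hG.preconnected a b
  exact exists_triple_aux G p.toPath.1.length a b p.toPath.1 le_rfl p.toPath.2 hnadj hab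

theorem truncDim_eq_card_sub_one_iff_complete {V : Type*} [Fintype V]
    (G : SimpleGraph V) (hG : G.Connected) (n : ℕ) (hn : Fintype.card V = n)
    (h2 : 2 ≤ n) (k : ℕ) (hk : 0 < k) :
    truncMetricDim G k = n - 1 ↔ G = (⊤ : SimpleGraph V) := by
  classical
  have htd0 : ∀ u v : V, truncDist G k u v = 0 ↔ u = v := by
    intro u v
    unfold truncDist
    constructor
    · intro h
      rcases Nat.min_eq_zero_iff.mp h with h | h
      · exact hG.dist_eq_zero_iff.mp h
      · omega
    · intro h; subst h; simp [SimpleGraph.dist_self]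
  constructor
  · -- dim = n-1 → complete
    intro hdim
    by_contra hne
    obtain ⟨u, w, x, huw, hwx, hnux, hux⟩ := exists_triple hG hne
    set R : Finset V := Finset.univ \ {u, w} with hR
    have hxR : x ∈ R := by
      simp only [hR, Finset.mem_sdiff, Finset.mem_univ, Finset.mem_insert, Finset.mem_singleton,
        true_and]
      push_neg
      exact ⟨fun h => hux h.symm, fun h => hwx.ne' h⟩
    have hres : IsTruncResolving G k ↑R := by
      constructor
      · exact ⟨x, hxR⟩
      · intro y z hyz
        by_contra hne'
        have hyR : y ∉ R := by
          intro h
          have h1 := hyz y h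
          rw [(htd0 y y).mpr rfl] at h1
          exact hne' ((htd0 z y).mp h1.symm).symm
        have hzR : z ∉ R := by
          intro h
          have h1 := hyz z h
          rw [(htd0 z z).mpr rfl] at h1
          exact hne' ((htd0 y z).mp h1)
        -- so y, z ∈ {u, w} and y ≠ z
        have hy : y = u ∨ y = w := by
          by_contra hc; push_neg at hc
          exact hyR (by simp [hR, hc.1, hc.2])
        have hz : z = u ∨ z = w := by
          by_contra hc; push_neg at hc
          exact hzR (by simp [hR, hc.1, hc.2])
        -- the pair {y,z} = {u,w}; distinguish by x
        have hux2 : truncDist G k u x ≠ 1 := by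
          unfold truncDist
          have hd : G.dist u x ≠ 1 := fun h => hnux (SimpleGraph.dist_eq_one_iff_adj.mp h)
          have hd0 : G.dist u x ≠ 0 := fun h => hux (hG.dist_eq_zero_iff.mp h)
          omega
        have hwx2 : truncDist G k w x = 1 := by
          unfold truncDist
          rw [SimpleGraph.dist_eq_one_iff_adj.mpr hwx]
          omega
        have := hyz x hxR
        rcases hy with rfl | rfl <;> rcases hz with rfl | rfl
        · exact hne' rfl
        · rw [hwx2] at this; exact hux2 this
        · rw [hwx2] at this; exact hux2 this.symm
        · exact hne' rfl
    have hmem : (n - 2) ∈ {m | ∃ R : Finset V, IsTruncResolving G k ↑R ∧ R.card = m} := by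
      refine ⟨R, hres, ?_⟩
      rw [hR, Finset.card_sdiff_of_subset (Finset.subset_univ _), Finset.card_univ, hn,
        Finset.card_insert_of_notMem (by simp [huw.ne]), Finset.card_singleton]
    have hle : truncMetricDim G k ≤ n - 2 := Nat.sInf_le hmem
    rw [hdim] at hle
    omega
  · -- complete → dim = n-1
    intro hc
    subst hc
    have hd1 : ∀ u v : V, u ≠ v → truncDist (⊤ : SimpleGraph V) k u v = 1 := by
      intro u v huv
      unfold truncDist
      rw [SimpleGraph.dist_eq_one_iff_adj.mpr (top_adj u v |>.mpr huv)]
      omega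
    have hne : Nonempty V := by
      rw [← Fintype.card_pos_iff]; omega
    obtain ⟨v₀⟩ := hne
    have hmem : (n - 1) ∈ {m | ∃ R : Finset V,
        IsTruncResolving (⊤ : SimpleGraph V) k ↑R ∧ R.card = m} := by
      refine ⟨Finset.univ \ {v₀}, ⟨?_, ?_⟩, ?_⟩
      · obtain ⟨v₁, hv₁⟩ := Fintype.exists_ne_of_one_lt_card (by omega) v₀
        exact ⟨v₁, by simp [hv₁]⟩
      · intro y z hyz
        by_cases hy : y = v₀
        · by_cases hz : z = v₀
          · rw [hy, hz]
          · have := hyz z (by simp [hz])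
            rw [(htd0 z z).mpr rfl] at this
            exact (htd0 y z).mp this
        · have := hyz y (by simp [hy])
          rw [(htd0 y y).mpr rfl] at this
          exact ((htd0 z y).mp this.symm).symm
      · rw [Finset.card_sdiff_of_subset (Finset.subset_univ _), Finset.card_univ, hn,
          Finset.card_singleton]
    refine le_antisymm (Nat.sInf_le hmem) ?_
    refine le_csInf ⟨n - 1, hmem⟩ ?_
    rintro m ⟨R, ⟨-, hres⟩, rfl⟩
    by_contra hlt
    push_neg at hlt
    -- R misses at least two vertices
    have hcard : (Finset.univ \ R).card ≥ 2 := by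
      rw [Finset.card_sdiff_of_subset (Finset.subset_univ _), Finset.card_univ, hn]
      omega
    obtain ⟨y, hy, z, hz, hyz⟩ := Finset.one_lt_card.mp hcard
    have hyR : y ∉ R := (Finset.mem_sdiff.mp hy).2
    have hzR : z ∉ R := (Finset.mem_sdiff.mp hz).2
    apply hyz
    apply hres
    intro r hr
    have hyr : y ≠ r := fun h => hyR (h ▸ hr)
    have hzr : z ≠ r := fun h => hzR (h ▸ hr)
    rw [hd1 y r hyr, hd1 z r hzr]
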